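/- Let (a₁, …, aₙ) be an n-tuple of real symmetric 3×3 matrices. Then the family is orthotropic — i.e. there exists g ∈ SO(3) such that gᵀ·aₖ·g is diagonal for every k, but there is no unit vector n ∈ ℝ³ such that every g ∈ SO(3) with g·n = n fixes every aₖ — if and only if aₖ·aₗ = aₗ·aₖ for all indices k, l (equivalently tr(aₖ × aₗ) = 0 for all k, l), and in addition either there exists an index j and x ∈ ℝ³ with det(x, aⱼ·x, aⱼ²·x) ≠ 0 (some aⱼ × aⱼ² ≠ 0), or there exist indices i, j and x ∈ ℝ³ with det(x, aᵢ·x, aⱼ·x) ≠ 0 (some aᵢ × aⱼ ≠ 0). -/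

import Mathlib

/-!
Conjugating by a rotation `g` that diagonalizes the family reduces everything to the diagonals
`dₖ` of `gᵀ aₖ g`. Such a `g` exists iff the `aₖ` commute (spectral theorem for commuting
symmetric matrices). The family is invariant under every rotation about a unit axis `v` iff each
`aₖ` lies in `span {1, v vᵀ}`; for such matrices `aᵢ x` and `aⱼ x` lie in `span {x, v}`, so all the
determinants vanish. Conversely, at `x = g (1, 1, 1)` the vanishing of the determinants reads
`det (1, dᵢ, dⱼ) = 0` together with the Vandermonde condition `det (1, dⱼ, dⱼ²) = 0`; this forces all
`dₖ` to be constant off one common coordinate `i₀`, so the family is axial about `g e_{i₀}`.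
-/

open Matrix

/-- The rotation group `SO(3)` as a set of real `3 × 3` matrices. -/
def SO3 : Set (Matrix (Fin 3) (Fin 3) ℝ) := {g | g * gᵀ = 1 ∧ g.det = 1}

/-- Determinant of the `3 × 3` matrix with columns `u`, `v`, `w`. -/
def det3 (u v w : Fin 3 → ℝ) : ℝ := (Matrix.of fun i j => ![u, v, w] j i).det

theorem det3_mulVec (g : Matrix (Fin 3) (Fin 3) ℝ) (u v w : Fin 3 → ℝ) :
    det3 (g *ᵥ u) (g *ᵥ v) (g *ᵥ w) = g.det * det3 u v w := by
  have hcols : (Matrix.of fun i j => ![g *ᵥ u, g *ᵥ v, g *ᵥ w] j i) =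
      g * Matrix.of fun i j => ![u, v, w] j i := by
    ext i j
    fin_cases j <;> simp [mul_apply, mulVec, dotProduct]
  rw [det3, hcols, det_mul, det3]

theorem det3_one_left (u w : Fin 3 → ℝ) :
    det3 1 u w = (u 1 - u 0) * (w 2 - w 0) - (u 2 - u 0) * (w 1 - w 0) := by
  rw [det3, det_fin_three]
  simp only [of_apply, Matrix.cons_val, Pi.one_apply]
  ring

theorem det3_add_smul_eq_zero (x v : Fin 3 → ℝ) (p c q d : ℝ) :
    det3 x (p • x + c • v) (q • x + d • v) = 0 := by
  rw [det3, det_fin_three]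
  simp only [of_apply, Matrix.cons_val, Pi.add_apply, Pi.smul_apply, smul_eq_mul]
  ring

theorem det3_conj_mulVec {g : Matrix (Fin 3) (Fin 3) ℝ} (hg : g ∈ SO3)
    (B C : Matrix (Fin 3) (Fin 3) ℝ) (x : Fin 3 → ℝ) :
    det3 (g *ᵥ x) ((g * B * gᵀ) *ᵥ (g *ᵥ x)) ((g * C * gᵀ) *ᵥ (g *ᵥ x)) =
      det3 x (B *ᵥ x) (C *ᵥ x) := by
  have hconj : ∀ M, (g * M * gᵀ) *ᵥ (g *ᵥ x) = g *ᵥ (M *ᵥ x) := fun M => by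
    rw [mulVec_mulVec, mulVec_mulVec, Matrix.mul_assoc, mul_eq_one_comm.mp hg.1, Matrix.mul_one]
  rw [hconj, hconj, det3_mulVec, hg.2, one_mul]

section Conj

variable {n R : Type*} [Fintype n] [DecidableEq n] [CommRing R] {g : Matrix n n R}

theorem conj_conj_transpose (hg : g * gᵀ = 1) (M : Matrix n n R) : g * (gᵀ * M * g) * gᵀ = M := by
  simp only [Matrix.mul_assoc, hg, Matrix.mul_one]
  rw [← Matrix.mul_assoc, hg, Matrix.one_mul]

theorem conj_mul_conj (hg : gᵀ * g = 1) (B C : Matrix n n R) :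
    g * B * gᵀ * (g * C * gᵀ) = g * (B * C) * gᵀ := by
  simp only [Matrix.mul_assoc]
  rw [← Matrix.mul_assoc gᵀ g, hg, Matrix.one_mul]

theorem commute_of_conj_eq {A : Matrix n n R} (hg : gᵀ * g = 1) (h : g * A * gᵀ = A) :
    Commute A g :=
  calc A * g = g * A * (gᵀ * g) := by rw [← Matrix.mul_assoc, h]
    _ = g * A := by rw [hg, Matrix.mul_one]

theorem commute_of_isDiag_conj {A B : Matrix n n R} (hg : g * gᵀ = 1) (hA : (gᵀ * A * g).IsDiag)
    (hB : (gᵀ * B * g).IsDiag) : Commute A B := by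
  have hD : Commute (gᵀ * A * g) (gᵀ * B * g) := by
    rw [← hA.diagonal_diag, ← hB.diagonal_diag]
    exact commute_diagonal _ _
  rw [← conj_conj_transpose hg A, ← conj_conj_transpose hg B, Commute, SemiconjBy,
    conj_mul_conj (mul_eq_one_comm.mp hg), conj_mul_conj (mul_eq_one_comm.mp hg), hD.eq]

end Conj

theorem LinearMap.IsSymmetric.exists_orthonormalBasis_forall_apply_eq_smul {𝕜 E ι : Type*}
    [RCLike 𝕜] [NormedAddCommGroup E] [InnerProductSpace 𝕜 E] [FiniteDimensional 𝕜 E]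
    {T : ι → Module.End 𝕜 E} (hT : ∀ k, (T k).IsSymmetric)
    (hC : Pairwise (Function.onFun Commute T)) :
    ∃ b : OrthonormalBasis (Fin (Module.finrank 𝕜 E)) 𝕜 E,
      ∀ j, ∃ χ : ι → 𝕜, ∀ k, T k (b j) = χ k • b j := by
  classical
  have hint := directSum_isInternal_of_pairwise_commute hT hC
  -- only finitely many joint eigenspaces are nonzero, so a subordinate basis can be indexed by them
  have := hint.submodule_iSupIndep.fintypeNeBotOfFiniteDimensional
  have horth := (orthogonalFamily_iInf_eigenspaces hT).comp
    (Subtype.val_injective (p := fun χ : ι → 𝕜 => ⨅ k, (T k).eigenspace (χ k) ≠ ⊥))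
  rw [← DirectSum.isInternal_ne_bot_iff] at hint
  exact ⟨hint.subordinateOrthonormalBasis rfl horth, fun j =>
    ⟨(hint.subordinateOrthonormalBasisIndex rfl j horth).1, fun k =>
      Module.End.mem_eigenspace_iff.mp <| (Submodule.mem_iInf _).mp
        (hint.subordinateOrthonormalBasis_subordinate rfl j horth) k⟩⟩

theorem Matrix.exists_mem_unitaryGroup_forall_isDiag {𝕜 m ι : Type*} [RCLike 𝕜] [Fintype m]
    [DecidableEq m] (a : ι → Matrix m m 𝕜) (ha : ∀ k, (a k).IsHermitian)
    (hcomm : ∀ k l, Commute (a k) (a l)) :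
    ∃ U ∈ unitaryGroup m 𝕜, ∀ k, (star U * a k * U).IsDiag := by
  obtain ⟨b₀, hb₀⟩ := LinearMap.IsSymmetric.exists_orthonormalBasis_forall_apply_eq_smul
    (T := fun k => toLpLinAlgEquiv 2 (a k)) (fun k => isSymmetric_toEuclideanLin_iff.mpr (ha k))
    (fun k l _ => (hcomm k l).map _)
  obtain ⟨e⟩ : Nonempty (Fin (Module.finrank 𝕜 (EuclideanSpace 𝕜 m)) ≃ m) :=
    ⟨Fintype.equivOfCardEq (by simp)⟩
  choose χ hχ using fun j => hb₀ (e.symm j)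
  obtain ⟨U, hU, hUapply⟩ : ∃ U ∈ unitaryGroup m 𝕜, ∀ i j, U i j = b₀ (e.symm j) i :=
    ⟨_, (EuclideanSpace.basisFun m 𝕜).toMatrix_orthonormalBasis_mem_unitary (b₀.reindex e),
      fun i j => by simp [Module.Basis.toMatrix_apply]⟩
  refine ⟨U, hU, fun k => ?_⟩
  have hcols : a k * U = U * diagonal (fun j => χ j k) := by
    ext i j
    have := congrArg (fun x : EuclideanSpace 𝕜 m => x i) (hχ j k)
    simp only [toLpLinAlgEquiv_apply_apply_ofLp, PiLp.smul_apply, smul_eq_mul] at this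
    rw [mul_diagonal, mul_comm, mul_apply']
    simp only [hUapply]
    exact this
  rw [Matrix.mul_assoc, hcols, ← Matrix.mul_assoc, (mem_unitaryGroup_iff').mp hU, Matrix.one_mul]
  exact isDiag_diagonal _

theorem exists_mem_SO3_forall_isDiag {ι : Type*} (a : ι → Matrix (Fin 3) (Fin 3) ℝ)
    (ha : ∀ k, (a k)ᵀ = a k) (hcomm : ∀ k l, Commute (a k) (a l)) :
    ∃ g ∈ SO3, ∀ k, (gᵀ * a k * g).IsDiag := by
  obtain ⟨U, hU, hdiag⟩ := exists_mem_unitaryGroup_forall_isDiag a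
    (fun k => by rw [IsHermitian, conjTranspose_eq_transpose_of_trivial, ha k]) hcomm
  have hUU : U * Uᵀ = 1 := by simpa [star_eq_conjTranspose] using mem_unitaryGroup_iff.mp hU
  simp only [star_eq_conjTranspose, conjTranspose_eq_transpose_of_trivial] at hdiag
  -- in odd dimension `-U` is still orthogonal, conjugates like `U`, and has determinant `-det U`
  rcases mul_self_eq_one_iff.mp (by simpa [det_mul] using congrArg det hUU) with h | h
  · exact ⟨U, ⟨hUU, h⟩, hdiag⟩
  · exact ⟨-U, ⟨by simpa using hUU, by rw [det_neg, h]; norm_num⟩, by simpa using hdiag⟩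

section Axial

variable {n R : Type*} [CommRing R]

theorem vecMulVec_self_mulVec_self [Fintype n] (v : n → R) :
    vecMulVec v v *ᵥ v = (v ⬝ᵥ v) • v := by
  rw [vecMulVec_mulVec, op_smul_eq_smul]

theorem vecMulVec_self_mul_self [Fintype n] (v : n → R) :
    vecMulVec v v * vecMulVec v v = (v ⬝ᵥ v) • vecMulVec v v := by
  rw [vecMulVec_mul_vecMulVec, vecMulVec_smul]

variable [DecidableEq n]

def IsAxial (v : n → R) (A : Matrix n n R) : Prop :=
  ∃ p s : R, A = p • 1 + s • vecMulVec v v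

theorem isAxial_diagonal_single (i₀ : n) {d : n → R} {c : R} (hd : ∀ i ≠ i₀, d i = c) :
    IsAxial (Pi.single i₀ 1) (diagonal d) := by
  refine ⟨c, d i₀ - c, ?_⟩
  ext i j
  rcases eq_or_ne i j with rfl | hij
  · rcases eq_or_ne i i₀ with rfl | hi
    · simp [vecMulVec_apply]
    · simp [vecMulVec_apply, hi, hd i hi]
  · simp only [diagonal_apply_ne _ hij, Matrix.add_apply, Matrix.smul_apply, one_apply_ne hij,
      smul_eq_mul, mul_zero, vecMulVec_apply, Pi.single_apply, mul_ite, mul_one, zero_add, right_eq_ite_iff]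
    rintro rfl rfl
    exact absurd rfl hij

variable [Fintype n]

theorem IsAxial.mulVec {v : n → R} {A : Matrix n n R} (hA : IsAxial v A) (x : n → R) :
    ∃ p c : R, A *ᵥ x = p • x + c • v := by
  obtain ⟨p, s, rfl⟩ := hA
  exact ⟨p, s * (v ⬝ᵥ x), by simp [add_mulVec, smul_mulVec, vecMulVec_mulVec, smul_smul]⟩

theorem IsAxial.mul {v : n → R} {A B : Matrix n n R} (hA : IsAxial v A) (hB : IsAxial v B) :
    IsAxial v (A * B) := by
  obtain ⟨p, s, rfl⟩ := hA
  obtain ⟨q, t, rfl⟩ := hB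
  refine ⟨p * q, p * t + s * q + s * t * (v ⬝ᵥ v), ?_⟩
  simp only [add_mul, mul_add, Matrix.smul_mul, Matrix.mul_smul, Matrix.one_mul, Matrix.mul_one,
    vecMulVec_self_mul_self]
  module

theorem conj_smul_one_add_smul_vecMulVec {g : Matrix n n R} (hg : g * gᵀ = 1) (v : n → R)
    (p s : R) :
    g * (p • 1 + s • vecMulVec v v) * gᵀ = p • 1 + s • vecMulVec (g *ᵥ v) (g *ᵥ v) := by
  rw [Matrix.mul_add, Matrix.add_mul, Matrix.mul_smul, Matrix.smul_mul, Matrix.mul_one, hg,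
    Matrix.mul_smul, Matrix.smul_mul, mul_vecMulVec, vecMulVec_mul, vecMul_transpose]

theorem IsAxial.conj {v : n → R} {A : Matrix n n R} (hA : IsAxial v A) {g : Matrix n n R}
    (hg : g * gᵀ = 1) : IsAxial (g *ᵥ v) (g * A * gᵀ) := by
  obtain ⟨p, s, rfl⟩ := hA
  exact ⟨p, s, conj_smul_one_add_smul_vecMulVec hg v p s⟩

theorem IsAxial.conj_eq_self {v : n → R} {A : Matrix n n R} (hA : IsAxial v A)
    {g : Matrix n n R} (hg : g * gᵀ = 1) (hgv : g *ᵥ v = v) : g * A * gᵀ = A := by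
  obtain ⟨p, s, rfl⟩ := hA
  rw [conj_smul_one_add_smul_vecMulVec hg, hgv]

end Axial

theorem det3_mulVec_eq_zero_of_isAxial {v : Fin 3 → ℝ} {A B : Matrix (Fin 3) (Fin 3) ℝ}
    (hA : IsAxial v A) (hB : IsAxial v B) (x : Fin 3 → ℝ) : det3 x (A *ᵥ x) (B *ᵥ x) = 0 := by
  obtain ⟨p, c, hAx⟩ := hA.mulVec x
  obtain ⟨q, d, hBx⟩ := hB.mulVec x
  rw [hAx, hBx, det3_add_smul_eq_zero]

section Cross

variable {R : Type*} [CommRing R]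

def crossMatrix (v : Fin 3 → R) : Matrix (Fin 3) (Fin 3) R :=
  !![0, -v 2, v 1; v 2, 0, -v 0; -v 1, v 0, 0]

theorem crossMatrix_mulVec (v w : Fin 3 → R) : crossMatrix v *ᵥ w = v ⨯₃ w := by
  ext i
  fin_cases i <;> simp [crossMatrix, cross_apply, mulVec, dotProduct, Fin.sum_univ_three] <;> ring

theorem transpose_crossMatrix (v : Fin 3 → R) : (crossMatrix v)ᵀ = -crossMatrix v := by
  ext i j
  fin_cases i <;> fin_cases j <;> simp [crossMatrix]

theorem crossMatrix_smul (t : R) (v : Fin 3 → R) : crossMatrix (t • v) = t • crossMatrix v := by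
  ext i j
  fin_cases i <;> fin_cases j <;> simp [crossMatrix]

theorem crossMatrix_mul_self (v : Fin 3 → R) :
    crossMatrix v * crossMatrix v = vecMulVec v v - (v ⬝ᵥ v) • 1 := by
  ext i j
  fin_cases i <;> fin_cases j <;>
    simp [crossMatrix, mul_apply, Fin.sum_univ_three, vecMulVec_apply, dotProduct] <;> ring

theorem crossMatrix_mul_vecMulVec (v : Fin 3 → R) : crossMatrix v * vecMulVec v v = 0 := by
  rw [mul_vecMulVec, crossMatrix_mulVec, cross_self, zero_vecMulVec]

theorem vecMulVec_mul_crossMatrix (v : Fin 3 → R) : vecMulVec v v * crossMatrix v = 0 := by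
  rw [vecMulVec_mul, ← mulVec_transpose, transpose_crossMatrix, neg_mulVec, crossMatrix_mulVec,
    cross_self, neg_zero, vecMulVec_zero]

end Cross

theorem eq_crossMatrix_of_transpose_eq_neg {C : Matrix (Fin 3) (Fin 3) ℝ} (hC : Cᵀ = -C) :
    C = crossMatrix ![C 2 1, C 0 2, C 1 0] := by
  have h : ∀ i j, C j i = -C i j := fun i j => congrFun (congrFun hC i) j
  ext i j
  fin_cases i <;> fin_cases j <;> simp [crossMatrix] <;>
    linarith [h 0 0, h 1 1, h 2 2, h 0 1, h 0 2, h 1 2]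

theorem eq_smul_crossMatrix_of_transpose_eq_neg {C : Matrix (Fin 3) (Fin 3) ℝ} (hC : Cᵀ = -C)
    {v : Fin 3 → ℝ} (hv : v ⬝ᵥ v = 1) (hCv : C *ᵥ v = 0) : ∃ t : ℝ, C = t • crossMatrix v := by
  have hCc := eq_crossMatrix_of_transpose_eq_neg hC
  set c : Fin 3 → ℝ := ![C 2 1, C 0 2, C 1 0]
  have hcv : c ⨯₃ v = 0 := by rw [← crossMatrix_mulVec, ← hCc, hCv]
  have hc : c = (v ⬝ᵥ c) • v := by
    have := cross_cross_eq_smul_sub_smul' v c v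
    rwa [hcv, map_zero, hv, one_smul, dotProduct_comm c v, eq_comm, sub_eq_zero] at this
  exact ⟨v ⬝ᵥ c, by rw [hCc, ← crossMatrix_smul, ← hc]⟩

theorem two_smul_vecMulVec_sub_one_mem_SO3 {v : Fin 3 → ℝ} (hv : v ⬝ᵥ v = 1) :
    (2 : ℝ) • vecMulVec v v - 1 ∈ SO3 := by
  refine ⟨?_, ?_⟩
  · rw [transpose_sub, transpose_smul, transpose_vecMulVec, transpose_one]
    simp only [sub_mul, mul_sub, Matrix.smul_mul, Matrix.mul_smul, Matrix.one_mul, Matrix.mul_one,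
      vecMulVec_self_mul_self, hv, one_smul]
    module
  · have hv' : v 0 * v 0 + v 1 * v 1 + v 2 * v 2 = 1 := by
      simpa [dotProduct, Fin.sum_univ_three] using hv
    simp only [det_fin_three, Matrix.sub_apply, Matrix.smul_apply, vecMulVec_apply, smul_eq_mul, one_apply_eq,
      one_apply_ne, ne_eq, Fin.reduceEq, not_false_eq_true, sub_zero]
    linear_combination 2 * hv'

theorem vecMulVec_add_crossMatrix_mem_SO3 {v : Fin 3 → ℝ} (hv : v ⬝ᵥ v = 1) :
    vecMulVec v v + crossMatrix v ∈ SO3 := by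
  refine ⟨?_, ?_⟩
  · rw [transpose_add, transpose_vecMulVec, transpose_crossMatrix, add_mul, mul_add, mul_add,
      vecMulVec_self_mul_self, crossMatrix_mul_vecMulVec, mul_neg, mul_neg,
      vecMulVec_mul_crossMatrix, crossMatrix_mul_self, hv]
    module
  · have hv' : v 0 * v 0 + v 1 * v 1 + v 2 * v 2 = 1 := by
      simpa [dotProduct, Fin.sum_univ_three] using hv
    simp only [crossMatrix, det_fin_three, Matrix.add_apply, vecMulVec_apply, of_apply, cons_val',
      cons_val_zero, cons_val_fin_one, add_zero, cons_val_one, cons_val]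
    linear_combination (v 0 * v 0 + v 1 * v 1 + v 2 * v 2 + 1) * hv'

theorem isAxial_of_commute {v : Fin 3 → ℝ} (hv : v ⬝ᵥ v = 1) {A : Matrix (Fin 3) (Fin 3) ℝ}
    (hA : Aᵀ = A) (hW : Commute A (vecMulVec v v)) (hK : Commute A (crossMatrix v)) :
    IsAxial v A := by
  set μ := v ⬝ᵥ (A *ᵥ v)
  have hAv : A *ᵥ v = μ • v := by
    simpa [← mulVec_mulVec, vecMulVec_mulVec, hv] using congrArg (· *ᵥ v) hW.eq
  -- `B` kills `v` and commutes with `K = crossMatrix v`, so `B K` is antisymmetric and kills `v`,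
  -- i.e. `B K = t K`; multiplying by `K` (with `K² = v vᵀ - 1`) gives `B = t (1 - v vᵀ)`
  set B := A - μ • vecMulVec v v
  have hBv : B *ᵥ v = 0 := by
    rw [sub_mulVec, smul_mulVec, vecMulVec_self_mulVec_self, hv, one_smul, hAv, sub_self]
  have hBW : B * vecMulVec v v = 0 := by rw [mul_vecMulVec, hBv, zero_vecMulVec]
  have hBK : Commute B (crossMatrix v) := hK.sub_left <| Commute.smul_left
    ((vecMulVec_mul_crossMatrix v).trans (crossMatrix_mul_vecMulVec v).symm) μ
  have hB : Bᵀ = B := by rw [transpose_sub, transpose_smul, transpose_vecMulVec, hA]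
  have hC : (B * crossMatrix v)ᵀ = -(B * crossMatrix v) := by
    rw [transpose_mul, transpose_crossMatrix, hB, neg_mul, hBK.eq]
  have hCv : (B * crossMatrix v) *ᵥ v = 0 := by
    rw [← mulVec_mulVec, crossMatrix_mulVec, cross_self, mulVec_zero]
  obtain ⟨t, ht⟩ := eq_smul_crossMatrix_of_transpose_eq_neg hC hv hCv
  have hBt : B = t • 1 - t • vecMulVec v v := by
    have := congrArg (· * crossMatrix v) ht
    simp only [Matrix.mul_assoc, Matrix.smul_mul, crossMatrix_mul_self, hv, one_smul, mul_sub, hBW,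
      Matrix.mul_one, zero_sub, neg_eq_iff_eq_neg] at this
    rw [this, smul_sub]
    abel
  exact ⟨t, μ - t, by rw [show A = B + μ • vecMulVec v v by simp [B], hBt]; module⟩

theorem isAxial_of_forall_SO3 {v : Fin 3 → ℝ} (hv : v ⬝ᵥ v = 1) {A : Matrix (Fin 3) (Fin 3) ℝ}
    (hA : Aᵀ = A) (hinv : ∀ g ∈ SO3, g *ᵥ v = v → g * A * gᵀ = A) : IsAxial v A := by
  have hcomm : ∀ g ∈ SO3, g *ᵥ v = v → Commute A g := fun g hg hgv =>
    commute_of_conj_eq (mul_eq_one_comm.mp hg.1) (hinv g hg hgv)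
  -- the half-turn and the quarter-turn about `v`
  have hH := hcomm _ (two_smul_vecMulVec_sub_one_mem_SO3 hv) (by
    rw [sub_mulVec, smul_mulVec, vecMulVec_self_mulVec_self, hv, one_smul, one_mulVec, two_smul,
      add_sub_cancel_right])
  have hQ := hcomm _ (vecMulVec_add_crossMatrix_mem_SO3 hv) (by
    rw [add_mulVec, vecMulVec_self_mulVec_self, hv, one_smul, crossMatrix_mulVec, cross_self,
      add_zero])
  have hW : Commute A (vecMulVec v v) := by
    simpa [smul_smul] using (hH.add_right (Commute.one_right A)).smul_right (1 / 2 : ℝ)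
  exact isAxial_of_commute hv hA hW (by simpa using hQ.sub_right hW)

def IsTransverselyIsotropic {ι : Type*} (a : ι → Matrix (Fin 3) (Fin 3) ℝ) : Prop :=
  ∃ v : Fin 3 → ℝ, (∑ i, v i ^ 2) = 1 ∧ ∀ g ∈ SO3, g.mulVec v = v → ∀ k, g * a k * gᵀ = a k

theorem isTransverselyIsotropic_iff {ι : Type*} {a : ι → Matrix (Fin 3) (Fin 3) ℝ}
    (ha : ∀ k, (a k)ᵀ = a k) :
    IsTransverselyIsotropic a ↔ ∃ v : Fin 3 → ℝ, v ⬝ᵥ v = 1 ∧ ∀ k, IsAxial v (a k) := by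
  have hsq : ∀ v : Fin 3 → ℝ, ∑ i, v i ^ 2 = v ⬝ᵥ v := fun v => by simp [dotProduct, sq]
  simp only [IsTransverselyIsotropic, hsq]
  constructor
  · rintro ⟨v, hv, hinv⟩
    exact ⟨v, hv, fun k => isAxial_of_forall_SO3 hv (ha k) fun g hg hgv => hinv g hg hgv k⟩
  · rintro ⟨v, hv, hax⟩
    exact ⟨v, hv, fun g hg hgv k => (hax k).conj_eq_self hg.1 hgv⟩

theorem exists_isAxial_diagonal_of_det3_eq_zero {ι : Type*} (d : ι → Fin 3 → ℝ)
    (h₁ : ∀ k, det3 1 (d k) (d k * d k) = 0) (h₂ : ∀ k l, det3 1 (d k) (d l) = 0) :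
    ∃ i₀ : Fin 3, ∀ k, IsAxial (Pi.single i₀ 1) (diagonal (d k)) := by
  simp only [det3_one_left, Pi.mul_apply] at h₁ h₂
  by_cases hall : ∀ k, d k 1 = d k 2
  · refine ⟨0, fun k => isAxial_diagonal_single 0 (c := d k 1) fun i hi => ?_⟩
    fin_cases i <;> simp_all
  obtain ⟨k₀, hk₀⟩ := not_forall.mp hall
  have hvdm : (d k₀ 1 - d k₀ 0) * (d k₀ 2 - d k₀ 0) * (d k₀ 2 - d k₀ 1) = 0 := by
    linear_combination h₁ k₀
  rcases mul_eq_zero.mp hvdm with h | h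
  · rcases mul_eq_zero.mp h with h | h
    · refine ⟨2, fun k => isAxial_diagonal_single 2 (c := d k 0) fun i hi => ?_⟩
      have hk : (d k₀ 2 - d k₀ 0) * (d k 1 - d k 0) = 0 := by
        linear_combination (d k 2 - d k 0) * h - h₂ k₀ k
      have hk' : d k 1 = d k 0 :=
        sub_eq_zero.mp ((mul_eq_zero.mp hk).resolve_left fun h' => hk₀ (by linarith))
      fin_cases i
      · rfl
      · exact hk'
      · exact absurd rfl hi
    · refine ⟨1, fun k => isAxial_diagonal_single 1 (c := d k 0) fun i hi => ?_⟩
      have hk : (d k₀ 1 - d k₀ 0) * (d k 2 - d k 0) = 0 := by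
        linear_combination h₂ k₀ k + (d k 1 - d k 0) * h
      have hk' : d k 2 = d k 0 :=
        sub_eq_zero.mp ((mul_eq_zero.mp hk).resolve_left fun h' => hk₀ (by linarith))
      fin_cases i
      · rfl
      · exact absurd rfl hi
      · exact hk'
  · exact absurd (by linarith) hk₀

theorem exists_isAxial_of_det3_eq_zero {ι : Type*} {a : ι → Matrix (Fin 3) (Fin 3) ℝ}
    {g : Matrix (Fin 3) (Fin 3) ℝ} (hg : g ∈ SO3) (hdiag : ∀ k, (gᵀ * a k * g).IsDiag)
    (h₁ : ∀ j x, det3 x (a j *ᵥ x) ((a j * a j) *ᵥ x) = 0)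
    (h₂ : ∀ i j x, det3 x (a i *ᵥ x) (a j *ᵥ x) = 0) :
    ∃ v : Fin 3 → ℝ, v ⬝ᵥ v = 1 ∧ ∀ k, IsAxial v (a k) := by
  have hgg : gᵀ * g = 1 := mul_eq_one_comm.mp hg.1
  set d : ι → Fin 3 → ℝ := fun k => (gᵀ * a k * g).diag
  have ha : ∀ k, a k = g * diagonal (d k) * gᵀ := fun k => by
    rw [(hdiag k).diagonal_diag, conj_conj_transpose hg.1]
  have hdiag_one : ∀ e : Fin 3 → ℝ, diagonal e *ᵥ 1 = e := fun e => by
    ext i; simp [mulVec_diagonal]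
  obtain ⟨i₀, hax⟩ := exists_isAxial_diagonal_of_det3_eq_zero d
    (fun k => by
      have := h₁ k (g *ᵥ 1)
      rwa [ha k, conj_mul_conj hgg, det3_conj_mulVec hg, diagonal_mul_diagonal, hdiag_one,
        hdiag_one] at this)
    (fun k l => by
      have := h₂ k l (g *ᵥ 1)
      rwa [ha k, ha l, det3_conj_mulVec hg, hdiag_one, hdiag_one] at this)
  refine ⟨g *ᵥ Pi.single i₀ 1, ?_, fun k => ha k ▸ (hax k).conj hg.1⟩
  rw [dotProduct_mulVec, ← mulVec_transpose, mulVec_mulVec, hgg, one_mulVec]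
  simp

/-- An `n`-tuple `(a₁, …, aₙ)` of real symmetric `3 × 3` matrices is
orthotropic (simultaneously diagonalizable by a rotation, but not at least transversely
isotropic) iff all the `aₖ` pairwise commute and in addition some `aⱼ × aⱼ² ≠ 0` or some
`aᵢ × aⱼ ≠ 0`. -/
theorem family_orthotropic_iff
    (n : ℕ) (a : Fin n → Matrix (Fin 3) (Fin 3) ℝ) (ha : ∀ k, (a k)ᵀ = a k) :
    ((∃ g ∈ SO3, ∀ k, (gᵀ * a k * g).IsDiag) ∧
      ¬ ∃ v : Fin 3 → ℝ, (∑ i, v i ^ 2) = 1 ∧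
        ∀ g ∈ SO3, g.mulVec v = v → ∀ k, g * a k * gᵀ = a k) ↔
    ((∀ k l, a k * a l = a l * a k) ∧
      ((∃ j, ∃ x : Fin 3 → ℝ, det3 x ((a j).mulVec x) ((a j * a j).mulVec x) ≠ 0) ∨
       (∃ i j, ∃ x : Fin 3 → ℝ, det3 x ((a i).mulVec x) ((a j).mulVec x) ≠ 0))) := by
  show (_ ∧ ¬ IsTransverselyIsotropic a) ↔ _
  rw [isTransverselyIsotropic_iff ha]
  constructor
  · rintro ⟨⟨g, hg, hdiag⟩, hnot⟩
    refine ⟨fun k l => (commute_of_isDiag_conj hg.1 (hdiag k) (hdiag l)).eq, ?_⟩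
    by_contra! hdeg
    exact hnot (exists_isAxial_of_det3_eq_zero hg hdiag hdeg.1 hdeg.2)
  · rintro ⟨hcomm, hdet⟩
    refine ⟨exists_mem_SO3_forall_isDiag a ha hcomm, fun ⟨v, _, hax⟩ => ?_⟩
    rcases hdet with ⟨j, x, hx⟩ | ⟨i, j, x, hx⟩
    · exact hx (det3_mulVec_eq_zero_of_isAxial (hax j) ((hax j).mul (hax j)) x)
    · exact hx (det3_mulVec_eq_zero_of_isAxial (hax i) (hax j) x)
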